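/- arXiv:1706.03124 — 3 statements merged into one kernel-verified Lean document; each statement's English description precedes it below -/
import Mathlib

section
/- Suppose the sequence (q_k) is periodic, i.e., there exists a positive integer p with q_{k+p} = q_k for all k ≥ 1. Let x ∈ [0,1] be given by a Cantor series representation x = ∑_{k=1}^∞ ε_k/(q_1 q_2 ⋯ q_k). Then x is a rational number if and only if the digit sequence (ε_k) is ultimately periodic, i.e., there exist positive integers N and T such that ε_{k+T} = ε_k for all k ≥ N. -/
/-!
Let `t_n = ∑_j ε_{n+j} / (q_n ⋯ q_{n+j})` be the series restarted at `n`, so that `x = t_0`,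
`0 ≤ t_n ≤ 1` and `q_n t_n = ε_n + t_{n+1}`. The last relation shows that all `t_n` are rational
as soon as one of them is.

If `x = r / d`, then every `d t_n` is an integer in `[0, d]`, so by pigeonhole `t_a = t_b` for
some `a < b` with `a ≡ b mod p`. As long as the tails stay below `1` the digit is recovered as
`ε_n = ⌊q_n t_n⌋`, so the digits repeat from `a` on with period `b - a`; if some tail equals `1`,
all later digits are maximal, `ε_k = q_k - 1`, and are periodic with `q`.

Conversely, if bases and digits are both `L`-periodic from `N` on, then `t_{N+L} = t_N`, and
unrolling the recursion `L` times gives `t_N = a + t_N / b` with `a` rational and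
`b = q_N ⋯ q_{N+L-1} ≥ 2`, so `t_N` is rational.
-/

open Finset

theorem exists_lt_modEq_eq_of_finite_range {α : Type*} {s : ℕ → α} (hs : (Set.range s).Finite)
    {p : ℕ} (hp : 0 < p) : ∃ a b, a < b ∧ a ≡ b [MOD p] ∧ s a = s b := by
  obtain ⟨a, -, b, -, hab, h⟩ := Set.infinite_univ.exists_ne_map_eq_of_mapsTo
    (f := fun n ↦ (n % p, s n)) (t := Set.Iio p ×ˢ Set.range s)
    (fun n _ ↦ ⟨Nat.mod_lt n hp, n, rfl⟩) ((Set.finite_Iio p).prod hs)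
  simp only [Prod.ext_iff] at h
  rcases hab.lt_or_gt with hab | hab
  · exact ⟨a, b, hab, h.1, h.2⟩
  · exact ⟨b, a, hab, h.1.symm, h.2.symm⟩

theorem add_mul_eq_of_add_eq {α : Type*} {f : ℕ → α} {N T : ℕ}
    (h : ∀ k ≥ N, f (k + T) = f k) (m : ℕ) : ∀ k ≥ N, f (k + T * m) = f k := by
  induction m with
  | zero => simp
  | succ m ih =>
    intro k hk
    rw [Nat.mul_succ, ← add_assoc, h _ (by omega), ih k hk]

namespace CantorSeries

variable (q ε : ℕ → ℕ)

noncomputable def term (n j : ℕ) : ℝ :=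
  (ε (n + j) : ℝ) / ∏ i ∈ range (j + 1), (q (n + i) : ℝ)

noncomputable def tail (n : ℕ) : ℝ := ∑' j, term q ε n j

def EventuallyPeriodic {α : Type*} (f : ℕ → α) : Prop :=
  ∃ N T : ℕ, 0 < T ∧ ∀ k ≥ N, f (k + T) = f k

variable {q ε}

theorem term_nonneg (n j : ℕ) : 0 ≤ term q ε n j := by
  unfold term; positivity

theorem sum_range_term_le (hε : ∀ k, ε k < q k) (n m : ℕ) :
    ∑ j ∈ range m, term q ε n j ≤ 1 - 1 / ∏ i ∈ range m, (q (n + i) : ℝ) := by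
  induction m with
  | zero => simp
  | succ m ih =>
    have hP : 0 < ∏ i ∈ range m, (q (n + i) : ℝ) :=
      prod_pos fun i _ => by exact_mod_cast (hε (n + i)).pos
    have hqm : (0 : ℝ) < q (n + m) := by exact_mod_cast (hε (n + m)).pos
    have hdigit : (ε (n + m) : ℝ) ≤ q (n + m) - 1 := by
      have : (ε (n + m) : ℝ) + 1 ≤ q (n + m) := by exact_mod_cast hε (n + m)
      linarith
    calc ∑ j ∈ range (m + 1), term q ε n j
        ≤ 1 - 1 / ∏ i ∈ range m, (q (n + i) : ℝ)
          + (q (n + m) - 1) / ((∏ i ∈ range m, (q (n + i) : ℝ)) * q (n + m)) := by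
          rw [sum_range_succ, term, prod_range_succ]
          gcongr
      _ = 1 - 1 / ∏ i ∈ range (m + 1), (q (n + i) : ℝ) := by
          rw [prod_range_succ]
          field_simp
          ring

theorem sum_range_term_le_one (hε : ∀ k, ε k < q k) (n m : ℕ) :
    ∑ j ∈ range m, term q ε n j ≤ 1 := by
  refine (sum_range_term_le hε n m).trans (sub_le_self _ ?_)
  have : 0 ≤ ∏ i ∈ range m, (q (n + i) : ℝ) := by positivity
  positivity

theorem summable_term (hε : ∀ k, ε k < q k) (n : ℕ) : Summable (term q ε n) :=
  summable_of_sum_range_le (term_nonneg n) (sum_range_term_le_one hε n)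

theorem tail_nonneg (n : ℕ) : 0 ≤ tail q ε n :=
  tsum_nonneg (term_nonneg n)

theorem tail_le_one (hε : ∀ k, ε k < q k) (n : ℕ) : tail q ε n ≤ 1 :=
  Real.tsum_le_of_sum_range_le (term_nonneg n) (sum_range_term_le_one hε n)

theorem term_succ (n j : ℕ) : term q ε n (j + 1) = term q ε (n + 1) j / q n := by
  rw [term, term, prod_range_succ', div_div, add_zero]
  simp only [add_right_comm n 1, add_assoc]

theorem mul_tail_eq (hε : ∀ k, ε k < q k) (n : ℕ) :
    q n * tail q ε n = ε n + tail q ε (n + 1) := by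
  have hq : (q n : ℝ) ≠ 0 := by exact_mod_cast (hε n).ne_bot
  have h0 : term q ε n 0 = ε n / q n := by simp [term]
  rw [tail, (summable_term hε n).tsum_eq_zero_add, h0]
  simp only [term_succ, tsum_div_const]
  rw [mul_add, mul_div_cancel₀ _ hq, mul_div_cancel₀ _ hq]
  rfl

theorem tail_succ_eq (hε : ∀ k, ε k < q k) (n : ℕ) :
    tail q ε (n + 1) = q n * tail q ε n - ε n := by
  rw [mul_tail_eq hε]; ring

theorem irrational_tail_iff (hε : ∀ k, ε k < q k) (n : ℕ) :
    Irrational (tail q ε n) ↔ Irrational (tail q ε 0) := by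
  induction n with
  | zero => rfl
  | succ n ih =>
    rw [tail_succ_eq hε, irrational_sub_natCast_iff, irrational_natCast_mul_iff, ih]
    exact and_iff_right (hε n).ne_bot

theorem exists_tail_eq_ratCast_add_div (hq : ∀ k, 2 ≤ q k) (hε : ∀ k, ε k < q k) (n j : ℕ) :
    ∃ (a : ℚ) (b : ℕ), 2 ^ j ≤ b ∧ tail q ε n = a + tail q ε (n + j) / b := by
  induction j with
  | zero => exact ⟨0, 1, le_rfl, by simp⟩
  | succ j ih =>
    obtain ⟨a, b, hb, h⟩ := ih
    have hqj : (q (n + j) : ℝ) ≠ 0 := by exact_mod_cast (hε _).ne_bot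
    have hb0 : (b : ℝ) ≠ 0 := by exact_mod_cast ((Nat.two_pow_pos j).trans_le hb).ne'
    refine ⟨a + ε (n + j) / (q (n + j) * b), q (n + j) * b, ?_, ?_⟩
    · rw [pow_succ']
      exact Nat.mul_le_mul (hq _) hb
    · rw [h, ← add_assoc, tail_succ_eq hε]
      push_cast
      field_simp
      ring

theorem tail_add_eq_of_periodic {n L : ℕ} (hqL : ∀ k ≥ n, q (k + L) = q k)
    (hεL : ∀ k ≥ n, ε (k + L) = ε k) : tail q ε (n + L) = tail q ε n := by
  refine tsum_congr fun j ↦ ?_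
  simp only [term, add_right_comm n L, hqL _ (Nat.le_add_right n _),
    hεL _ (Nat.le_add_right n _)]

theorem not_irrational_of_tail_add_eq (hq : ∀ k, 2 ≤ q k) (hε : ∀ k, ε k < q k) {n L : ℕ}
    (hL : 0 < L) (h : tail q ε (n + L) = tail q ε n) : ¬Irrational (tail q ε n) := by
  obtain ⟨a, b, hb, ha⟩ := exists_tail_eq_ratCast_add_div hq hε n L
  have hb1 : (1 : ℝ) < b := by exact_mod_cast (Nat.one_lt_two_pow hL.ne').trans_le hb
  rw [h] at ha
  have : tail q ε n = (a * b / (b - 1) : ℚ) := by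
    push_cast
    rw [eq_div_iff (by linarith)]
    field_simp at ha
    linear_combination ha
  rw [this]
  exact Rat.not_irrational _

theorem exists_tail_mul_den_eq_intCast (hε : ∀ k, ε k < q k) {r : ℚ} (hr : tail q ε 0 = r)
    (n : ℕ) : ∃ z : ℤ, tail q ε n * r.den = z := by
  induction n with
  | zero => exact ⟨r.num, by rw [hr]; exact_mod_cast r.mul_den_eq_num⟩
  | succ n ih =>
    obtain ⟨z, hz⟩ := ih
    refine ⟨q n * z - ε n * r.den, ?_⟩
    rw [tail_succ_eq hε]
    push_cast
    rw [← hz]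
    ring

theorem finite_range_tail (hε : ∀ k, ε k < q k) {r : ℚ} (hr : tail q ε 0 = r) :
    (Set.range (tail q ε)).Finite := by
  refine ((Set.finite_Icc (0 : ℤ) r.den).image fun z : ℤ ↦ (z : ℝ) / r.den).subset ?_
  rintro _ ⟨n, rfl⟩
  obtain ⟨z, hz⟩ := exists_tail_mul_den_eq_intCast hε hr n
  have hd : (0 : ℝ) < r.den := by exact_mod_cast r.den_pos
  have hz0 : (0 : ℝ) ≤ z := hz ▸ mul_nonneg (tail_nonneg n) hd.le
  have hzd : (z : ℝ) ≤ r.den := hz ▸ mul_le_of_le_one_left hd.le (tail_le_one hε n)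
  refine ⟨z, ⟨by exact_mod_cast hz0, by exact_mod_cast hzd⟩, ?_⟩
  change (z : ℝ) / r.den = _
  rw [← hz, mul_div_cancel_right₀ _ hd.ne']

theorem digit_eq_floor (hε : ∀ k, ε k < q k) {n : ℕ} (h : tail q ε (n + 1) < 1) :
    ε n = ⌊q n * tail q ε n⌋₊ := by
  rw [mul_tail_eq hε, add_comm, Nat.floor_add_natCast (tail_nonneg _), Nat.floor_eq_zero.mpr h,
    zero_add]

theorem eventuallyPeriodic_of_tail_eq (hε : ∀ k, ε k < q k) (hlt : ∀ n, tail q ε n < 1)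
    {a L : ℕ} (hL : 0 < L) (hqL : ∀ k ≥ a, q (k + L) = q k)
    (h : tail q ε (a + L) = tail q ε a) : EventuallyPeriodic ε := by
  have hdigit : ∀ k ≥ a, tail q ε (k + L) = tail q ε k → ε (k + L) = ε k := by
    intro k hk htail
    rw [digit_eq_floor hε (hlt _), digit_eq_floor hε (hlt _), hqL k hk, htail]
  have htail : ∀ k ≥ a, tail q ε (k + L) = tail q ε k := by
    intro k hk
    induction k, hk using Nat.le_induction with
    | base => exact h
    | succ k hk ih =>
      rw [add_right_comm, tail_succ_eq hε, tail_succ_eq hε, ih, hdigit k hk ih, hqL k hk]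
  exact ⟨a, L, hL, fun k hk ↦ hdigit k hk (htail k hk)⟩

theorem tail_succ_eq_one (hε : ∀ k, ε k < q k) {n : ℕ} (h : tail q ε n = 1) :
    ε n + 1 = q n ∧ tail q ε (n + 1) = 1 := by
  have hrec := mul_tail_eq hε n
  have hdigit : (ε n : ℝ) + 1 ≤ q n := by exact_mod_cast hε n
  have := tail_le_one hε (n + 1)
  rw [h, mul_one] at hrec
  have htail : tail q ε (n + 1) = 1 := by linarith
  refine ⟨?_, htail⟩
  rw [htail] at hrec
  exact_mod_cast hrec.symm

theorem eventuallyPeriodic_of_tail_eq_one (hε : ∀ k, ε k < q k) {p : ℕ} (hp : 0 < p)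
    (hqp : Function.Periodic q p) {n : ℕ} (h : tail q ε n = 1) : EventuallyPeriodic ε := by
  have htail : ∀ k ≥ n, tail q ε k = 1 := by
    intro k hk
    induction k, hk using Nat.le_induction with
    | base => exact h
    | succ k _ ih => exact (tail_succ_eq_one hε ih).2
  refine ⟨n, p, hp, fun k hk ↦ ?_⟩
  have h₁ := (tail_succ_eq_one hε (htail k hk)).1
  have h₂ := (tail_succ_eq_one hε (htail (k + p) (by omega))).1
  rw [hqp k] at h₂
  omega

theorem eventuallyPeriodic_of_finite_range_tail (hε : ∀ k, ε k < q k) {p : ℕ} (hp : 0 < p)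
    (hqp : Function.Periodic q p) (hfin : (Set.range (tail q ε)).Finite) :
    EventuallyPeriodic ε := by
  by_cases hone : ∃ n, tail q ε n = 1
  · obtain ⟨n, hn⟩ := hone
    exact eventuallyPeriodic_of_tail_eq_one hε hp hqp hn
  push Not at hone
  obtain ⟨a, b, hab, hmod, h⟩ := exists_lt_modEq_eq_of_finite_range hfin hp
  obtain ⟨t, ht⟩ : p ∣ b - a := (Nat.modEq_iff_dvd' hab.le).mp hmod
  refine eventuallyPeriodic_of_tail_eq hε (fun n ↦ (tail_le_one hε n).lt_of_ne (hone n))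
    (a := a) (L := b - a) (by omega) (fun k _ ↦ ?_) ?_
  · rw [ht, mul_comm]
    exact hqp.nat_mul t k
  · rwa [Nat.add_sub_cancel' hab.le, eq_comm]

end CantorSeries

open CantorSeries

theorem cantor_periodic_rational_iff_eventually_periodic_digits_general
    (q ε : ℕ → ℕ) (hq : ∀ k, 2 ≤ q k) (hε : ∀ k, ε k < q k)
    (hper : ∃ p : ℕ, 0 < p ∧ ∀ k, q (k + p) = q k)
    (x : ℝ)
    (hx : x = ∑' k : ℕ, (ε k : ℝ) / ∏ i ∈ Finset.range (k + 1), (q i : ℝ)) :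
    (∃ r : ℚ, x = (r : ℝ)) ↔
      ∃ N T : ℕ, 0 < T ∧ ∀ k ≥ N, ε (k + T) = ε k := by
  obtain ⟨p, hp, hqp⟩ := hper
  have hx0 : tail q ε 0 = x := by simp [hx, tail, term]
  constructor
  · rintro ⟨r, hr⟩
    exact eventuallyPeriodic_of_finite_range_tail hε hp hqp (finite_range_tail hε (hx0.trans hr))
  · rintro ⟨N, T, hT, hεT⟩
    have hperiod : tail q ε (N + T * p) = tail q ε N :=
      tail_add_eq_of_periodic (fun k _ ↦ Function.Periodic.nat_mul hqp T k)
        (add_mul_eq_of_add_eq hεT p)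
    have := not_irrational_of_tail_add_eq hq hε (Nat.mul_pos hT hp) hperiod
    rw [irrational_tail_iff hε, hx0, Irrational, not_not] at this
    obtain ⟨r, hr⟩ := this
    exact ⟨r, hr.symm⟩

/-- (Cantor) If the basis sequence `(q_k)` is periodic, a number
`x ∈ [0,1]` represented by the Cantor series `x = ∑ ε_k / (q_1 ⋯ q_k)` is rational iff the
digit sequence `(ε_k)` is ultimately periodic. (Sequences are 0-indexed.) -/
theorem cantor_periodic_rational_iff_eventually_periodic_digits
    (q ε : ℕ → ℕ) (hq : ∀ k, 2 ≤ q k) (hε : ∀ k, ε k < q k)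
    (hper : ∃ p : ℕ, 0 < p ∧ ∀ k, q (k + p) = q k)
    (x : ℝ) (hmem : x ∈ Set.Icc (0 : ℝ) 1)
    (hx : x = ∑' k : ℕ, (ε k : ℝ) / ∏ i ∈ Finset.range (k + 1), (q i : ℝ)) :
    (∃ r : ℚ, x = (r : ℝ)) ↔
      ∃ N T : ℕ, 0 < T ∧ ∀ k ≥ N, ε (k + T) = ε k :=
  cantor_periodic_rational_iff_eventually_periodic_digits_general q ε hq hε hper x hx
end

section
/- Let x = ∑_{k=1}^∞ ε_k/(q_1 q_2 ⋯ q_k) be a Cantor series representation, and suppose that every prime number divides q_k for infinitely many indices k. Then x is irrational if and only if both ε_k > 0 for infinitely many k and ε_k < q_k − 1 for infinitely many k. -/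
open Finset Filter

/-!
Write `Q_N = q₀ ⋯ q_{N-1}`. Then `Q_N x = m + x_N` with `m ∈ ℕ`, where `x_N` is the value of the
shifted series with digits `ε_{N+i}` and bases `q_{N+i}`, and `0 ≤ x_N ≤ 1`: `x_N = 0` when all its
digits vanish, `x_N = 1` when all are maximal (the series then telescopes), and `0 < x_N < 1` when
some digit is positive and some is not maximal. If `x` is irrational then so is every `x_N`, which
rules out the first two cases. Conversely, if `x = a / b`, the hypothesis on the primes gives
`b ∣ Q_N` for some `N`, so `x_N = Q_N x - m` is an integer, excluding the third case.
-/

namespace CantorSeries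

variable {q ε : ℕ → ℕ}

def denom (q : ℕ → ℕ) (n : ℕ) : ℕ := ∏ i ∈ range n, q i

noncomputable def value (q ε : ℕ → ℕ) : ℝ := ∑' k, (ε k : ℝ) / denom q (k + 1)

noncomputable def remainder (q ε : ℕ → ℕ) (N : ℕ) : ℝ :=
  value (fun i => q (i + N)) (fun i => ε (i + N))

@[simp]
lemma denom_zero : denom q 0 = 1 := prod_range_zero q

lemma denom_succ (n : ℕ) : denom q (n + 1) = denom q n * q n := prod_range_succ q n

lemma denom_succ' (n : ℕ) : denom q (n + 1) = denom (fun i => q (i + 1)) n * q 0 :=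
  prod_range_succ' q n

lemma denom_pos (hq : ∀ k, 0 < q k) (n : ℕ) : 0 < denom q n := prod_pos fun i _ => hq i

lemma tendsto_denom_atTop (hq : ∀ k, 2 ≤ q k) : Tendsto (denom q) atTop atTop := by
  refine tendsto_atTop_mono (fun n => ?_) tendsto_id
  calc n ≤ 2 ^ n := Nat.lt_two_pow_self.le
    _ = ∏ _i ∈ range n, 2 := by simp
    _ ≤ denom q n := prod_le_prod' fun i _ => hq i

lemma exists_le_dvd_prod_Ico (hprime : ∀ p : ℕ, p.Prime → {k | p ∣ q k}.Infinite)
    {b : ℕ} (hb : b ≠ 0) (M : ℕ) : ∃ N, M ≤ N ∧ b ∣ ∏ i ∈ Ico M N, q i := by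
  induction b using Nat.recOnMul generalizing M with
  | zero => exact absurd rfl hb
  | one => exact ⟨M, le_rfl, one_dvd _⟩
  | prime p hp =>
    obtain ⟨k, hk, hpk⟩ := frequently_atTop.1 (Nat.frequently_atTop_iff_infinite.2 (hprime p hp)) M
    exact ⟨k + 1, by omega, hpk.trans (dvd_prod_of_mem q (mem_Ico.2 ⟨hk, k.lt_succ_self⟩))⟩
  | mul a b iha ihb =>
    obtain ⟨N₁, hMN₁, ha⟩ := iha (left_ne_zero_of_mul hb) M
    obtain ⟨N₂, hN₁N₂, hb⟩ := ihb (right_ne_zero_of_mul hb) N₁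
    refine ⟨N₂, hMN₁.trans hN₁N₂, ?_⟩
    rw [← prod_Ico_consecutive q hMN₁ hN₁N₂]
    exact mul_dvd_mul ha hb

lemma exists_dvd_denom (hprime : ∀ p : ℕ, p.Prime → {k | p ∣ q k}.Infinite)
    {b : ℕ} (hb : b ≠ 0) : ∃ N, b ∣ denom q N := by
  obtain ⟨N, -, h⟩ := exists_le_dvd_prod_Ico hprime hb 0
  exact ⟨N, by rwa [denom, range_eq_Ico]⟩

lemma sub_one_div_denom (hq : ∀ k, 0 < q k) (k : ℕ) :
    ((q k : ℝ) - 1) / denom q (k + 1) = (denom q k : ℝ)⁻¹ - (denom q (k + 1) : ℝ)⁻¹ := by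
  have hk : (denom q k : ℝ) ≠ 0 := by exact_mod_cast (denom_pos hq k).ne'
  have hqk : (q k : ℝ) ≠ 0 := by exact_mod_cast (hq k).ne'
  rw [denom_succ, Nat.cast_mul]
  field_simp

lemma div_denom_le (hε : ∀ k, ε k < q k) (k : ℕ) :
    (ε k : ℝ) / denom q (k + 1) ≤ (denom q k : ℝ)⁻¹ - (denom q (k + 1) : ℝ)⁻¹ := by
  have hq : ∀ k, 0 < q k := fun k => Nat.zero_lt_of_lt (hε k)
  rw [← sub_one_div_denom hq]
  have : (ε k : ℝ) + 1 ≤ q k := by exact_mod_cast hε k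
  gcongr
  linarith

lemma sum_range_inv_denom_sub (n : ℕ) :
    ∑ k ∈ range n, ((denom q k : ℝ)⁻¹ - (denom q (k + 1) : ℝ)⁻¹) = 1 - (denom q n : ℝ)⁻¹ := by
  rw [sum_range_sub' (fun k => (denom q k : ℝ)⁻¹), denom_zero, Nat.cast_one, inv_one]

lemma summable_div_denom (hε : ∀ k, ε k < q k) : Summable fun k => (ε k : ℝ) / denom q (k + 1) := by
  refine summable_of_sum_range_le (c := 1) (fun k => by positivity) fun n => ?_
  calc ∑ k ∈ range n, (ε k : ℝ) / denom q (k + 1)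
      ≤ ∑ k ∈ range n, ((denom q k : ℝ)⁻¹ - (denom q (k + 1) : ℝ)⁻¹) :=
        sum_le_sum fun k _ => div_denom_le hε k
    _ ≤ 1 := by rw [sum_range_inv_denom_sub]; simp

lemma value_eq_div (hε : ∀ k, ε k < q k) :
    value q ε = (ε 0 + value (fun i => q (i + 1)) (fun i => ε (i + 1))) / q 0 := by
  rw [value, (summable_div_denom hε).tsum_eq_zero_add, value, add_div, ← tsum_div_const]
  simp only [denom_succ' (_ + 1), Nat.cast_mul, div_mul_eq_div_div, zero_add, denom_succ' 0,
    denom_zero, one_mul]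

lemma value_eq_zero (h : ∀ k, ε k = 0) : value q ε = 0 := by simp [value, h]

lemma value_eq_one (hq : ∀ k, 2 ≤ q k) (h : ∀ k, ε k = q k - 1) : value q ε = 1 := by
  have hq₀ : ∀ k, 0 < q k := fun k => by have := hq k; omega
  have hterm : ∀ k, (ε k : ℝ) / denom q (k + 1) =
      (denom q k : ℝ)⁻¹ - (denom q (k + 1) : ℝ)⁻¹ := fun k => by
    rw [h, Nat.cast_sub (hq₀ k), Nat.cast_one, sub_one_div_denom hq₀]
  refine ((hasSum_iff_tendsto_nat_of_nonneg (fun k => by positivity) 1).2 ?_).tsum_eq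
  simp only [hterm, sum_range_inv_denom_sub]
  have hinv : Tendsto (fun n => (denom q n : ℝ)⁻¹) atTop (nhds 0) :=
    tendsto_inv_atTop_zero.comp (tendsto_natCast_atTop_atTop.comp (tendsto_denom_atTop hq))
  simpa using hinv.const_sub (1 : ℝ)

lemma value_pos (hε : ∀ k, ε k < q k) {j : ℕ} (hj : 0 < ε j) : 0 < value q ε := by
  have hq : ∀ k, 0 < q k := fun k => Nat.zero_lt_of_lt (hε k)
  have := denom_pos hq (j + 1)
  exact (summable_div_denom hε).tsum_pos (fun k => by positivity) j (by positivity)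

lemma value_lt_one (hq : ∀ k, 2 ≤ q k) (hε : ∀ k, ε k < q k) {j : ℕ} (hj : ε j < q j - 1) :
    value q ε < 1 := by
  have hmax : ∀ k, q k - 1 < q k := fun k => by have := hq k; omega
  rw [← value_eq_one hq (fun _ => rfl)]
  have := denom_pos (fun k => Nat.zero_lt_of_lt (hε k)) (j + 1)
  refine (summable_div_denom hε).tsum_lt_tsum (i := j) (fun k => ?_) ?_ (summable_div_denom hmax)
  · have := hε k
    dsimp only
    gcongr
    omega
  · gcongr

@[simp]
lemma remainder_zero : remainder q ε 0 = value q ε := rfl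

lemma remainder_succ (hε : ∀ k, ε k < q k) (N : ℕ) :
    remainder q ε N = (ε N + remainder q ε (N + 1)) / q N := by
  rw [remainder, value_eq_div fun _ => hε _]
  simp only [zero_add, add_right_comm _ 1 N]
  rfl

lemma exists_denom_mul_value_eq (hε : ∀ k, ε k < q k) (N : ℕ) :
    ∃ m : ℕ, denom q N * value q ε = m + remainder q ε N := by
  induction N with
  | zero => exact ⟨0, by simp⟩
  | succ N ih =>
    obtain ⟨m, hm⟩ := ih
    have hqN : (q N : ℝ) ≠ 0 := by exact_mod_cast (Nat.zero_lt_of_lt (hε N)).ne'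
    refine ⟨q N * m + ε N, ?_⟩
    rw [denom_succ, Nat.cast_mul, mul_right_comm, hm, remainder_succ hε N]
    push_cast
    field_simp
    ring

lemma irrational_remainder (hε : ∀ k, ε k < q k) (h : Irrational (value q ε)) (N : ℕ) :
    Irrational (remainder q ε N) := by
  obtain ⟨m, hm⟩ := exists_denom_mul_value_eq hε N
  have hN : denom q N ≠ 0 := (denom_pos (fun k => Nat.zero_lt_of_lt (hε k)) N).ne'
  exact (hm ▸ h.natCast_mul hN).of_natCast_add m

lemma frequently_pos_of_irrational (hε : ∀ k, ε k < q k) (h : Irrational (value q ε)) :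
    ∃ᶠ k in atTop, 0 < ε k := by
  by_contra hfreq
  obtain ⟨N, hN⟩ := eventually_atTop.1 (not_frequently.1 hfreq)
  refine (irrational_remainder hε h N).ne_zero (value_eq_zero fun i => ?_)
  simpa using hN (i + N) (Nat.le_add_left N i)

lemma frequently_lt_sub_one_of_irrational (hq : ∀ k, 2 ≤ q k) (hε : ∀ k, ε k < q k)
    (h : Irrational (value q ε)) : ∃ᶠ k in atTop, ε k < q k - 1 := by
  by_contra hfreq
  obtain ⟨N, hN⟩ := eventually_atTop.1 (not_frequently.1 hfreq)
  refine (irrational_remainder hε h N).ne_one (value_eq_one (fun _ => hq _) fun i => ?_)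
  have := hN (i + N) (Nat.le_add_left N i)
  have := hε (i + N)
  omega

lemma exists_int_natCast_mul_eq (r : ℚ) {n : ℕ} (h : r.den ∣ n) : ∃ z : ℤ, (n : ℝ) * r = z := by
  obtain ⟨c, rfl⟩ := h
  refine ⟨c * r.num, ?_⟩
  have : ((r.den * c : ℕ) : ℚ) * r = ((c * r.num : ℤ) : ℚ) := by
    push_cast
    rw [← Rat.den_mul_eq_num]
    ring
  exact_mod_cast congrArg (Rat.cast : ℚ → ℝ) this

lemma irrational_value (hq : ∀ k, 2 ≤ q k) (hε : ∀ k, ε k < q k)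
    (hprime : ∀ p : ℕ, p.Prime → {k | p ∣ q k}.Infinite)
    (hpos : ∃ᶠ k in atTop, 0 < ε k) (hlt : ∃ᶠ k in atTop, ε k < q k - 1) :
    Irrational (value q ε) := by
  rintro ⟨r, hr⟩
  obtain ⟨N, hN⟩ := exists_dvd_denom hprime r.den_nz
  obtain ⟨z, hz⟩ := exists_int_natCast_mul_eq r hN
  obtain ⟨m, hm⟩ := exists_denom_mul_value_eq hε N
  obtain ⟨j, hjN, hj⟩ := frequently_atTop.1 hpos N
  obtain ⟨j', hj'N, hj'⟩ := frequently_atTop.1 hlt N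
  have h0 : 0 < remainder q ε N :=
    value_pos (fun _ => hε _) (j := j - N) (by rwa [Nat.sub_add_cancel hjN])
  have h1 : remainder q ε N < 1 :=
    value_lt_one (fun _ => hq _) (fun _ => hε _) (j := j' - N) (by rwa [Nat.sub_add_cancel hj'N])
  have hrem : remainder q ε N = ((z - m : ℤ) : ℝ) := by
    push_cast
    rw [← hz, hr, hm]
    ring
  rw [hrem] at h0 h1
  have : (0 : ℤ) < z - m := by exact_mod_cast h0
  have : z - m < (1 : ℤ) := by exact_mod_cast h1
  omega

end CantorSeries

open CantorSeries in
/-- (Marques, generalizing Sondow) Let `x = ∑ ε_k / (q_1 ⋯ q_k)` be a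
Cantor series representation and suppose every prime divides `q_k` for infinitely many `k`.
Then `x` is irrational iff both `ε_k > 0` infinitely often and `ε_k < q_k − 1` infinitely
often. (Sequences are 0-indexed.) -/
theorem cantor_irrational_iff_digits_infinitely_often
    (q ε : ℕ → ℕ) (hq : ∀ k, 2 ≤ q k) (hε : ∀ k, ε k < q k)
    (hprime : ∀ p : ℕ, p.Prime → {k : ℕ | p ∣ q k}.Infinite)
    (x : ℝ)
    (hx : x = ∑' k : ℕ, (ε k : ℝ) / ∏ i ∈ Finset.range (k + 1), (q i : ℝ)) :
    Irrational x ↔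
      ({k : ℕ | 0 < ε k}.Infinite ∧ {k : ℕ | ε k < q k - 1}.Infinite) := by
  have hx' : x = value q ε := by simp only [hx, value, denom, Nat.cast_prod]
  simp only [hx', ← Nat.frequently_atTop_iff_infinite]
  exact ⟨fun h => ⟨frequently_pos_of_irrational hε h, frequently_lt_sub_one_of_irrational hq hε h⟩,
    fun ⟨hpos, hlt⟩ => irrational_value hq hε hprime hpos hlt⟩
end

section
/- Let (q_k) and (ε_k) be sequences of positive integers with q_k ≥ 2 for all k, and suppose the series S = ∑_{k=1}^∞ ε_k/(q_1 q_2 ⋯ q_k) converges. For N ≥ 1 set S_N = ∑_{k=N}^∞ ε_k/(q_N q_{N+1} ⋯ q_k). If S = r/p for some integer r and positive integer p, then p · S_N is an integer for every positive integer N. -/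
open Finset Filter

/-- The tail sum `S_{N+1} = ∑_{k=N+1}^∞ ε_k/(q_{N+1} ⋯ q_k)` of a Cantor series
(0-indexed: `cantorTail q ε N` is the paper's `S_{N+1}`). -/
noncomputable def cantorTail (q ε : ℕ → ℕ) (N : ℕ) : ℝ :=
  ∑' j : ℕ, (ε (N + j) : ℝ) / ∏ i ∈ Finset.Ico N (N + j + 1), (q i : ℝ)

/-! Splitting off the first term `ε_N / q_N` of `S_N` gives the recursion
`S_{N+1} = q_N S_N - ε_N`. Since `p S_1 = r` is an integer and the `q_N`, `ε_N` are integers,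
the recursion keeps `p S_N` integral for every `N`. -/

noncomputable def cantorTerm (q ε : ℕ → ℕ) (k : ℕ) : ℝ :=
  (ε k : ℝ) / ∏ i ∈ range (k + 1), (q i : ℝ)

namespace cantorTail

variable {q : ℕ → ℕ} (ε : ℕ → ℕ)

theorem zero_eq_tsum_cantorTerm : cantorTail q ε 0 = ∑' k, cantorTerm q ε k := by
  simp only [cantorTail, cantorTerm, zero_add, range_eq_Ico]

variable (hq : ∀ k, q k ≠ 0)
include hq

theorem eq_prod_mul_tsum_cantorTerm (N : ℕ) :
    cantorTail q ε N = (∏ i ∈ range N, (q i : ℝ)) * ∑' j, cantorTerm q ε (N + j) := by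
  have hq' : ∀ k, (q k : ℝ) ≠ 0 := fun k => Nat.cast_ne_zero.mpr (hq k)
  rw [cantorTail, ← tsum_mul_left]
  refine tsum_congr fun j => ?_
  rw [cantorTerm, ← prod_range_mul_prod_Ico _ (by omega : N ≤ N + j + 1), ← mul_div_assoc,
    mul_div_mul_left _ _ (prod_ne_zero_iff.mpr fun i _ => hq' i)]

theorem succ_eq (hsum : Summable (cantorTerm q ε)) (N : ℕ) :
    cantorTail q ε (N + 1) = q N * cantorTail q ε N - ε N := by
  have hq' : ∀ k, (q k : ℝ) ≠ 0 := fun k => Nat.cast_ne_zero.mpr (hq k)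
  have hsplit : ∑' j, cantorTerm q ε (N + j)
      = cantorTerm q ε N + ∑' j, cantorTerm q ε (N + 1 + j) := by
    rw [Summable.tsum_eq_zero_add (f := fun j => cantorTerm q ε (N + j))
      (hsum.comp_injective (add_right_injective N))]
    simp only [add_zero, add_right_comm N 1, add_assoc]
  have hfirst : (∏ i ∈ range N, (q i : ℝ)) * q N * cantorTerm q ε N = ε N := by
    rw [← prod_range_succ, cantorTerm]
    exact mul_div_cancel₀ _ (prod_ne_zero_iff.mpr fun i _ => hq' i)
  rw [eq_prod_mul_tsum_cantorTerm ε hq, eq_prod_mul_tsum_cantorTerm ε hq, hsplit, prod_range_succ,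
    ← hfirst]
  ring

theorem exists_int_natCast_mul (hsum : Summable (cantorTerm q ε)) (p : ℕ)
    (h0 : ∃ z : ℤ, (p : ℝ) * cantorTail q ε 0 = z) :
    ∀ N, ∃ z : ℤ, (p : ℝ) * cantorTail q ε N = z := by
  intro N
  induction N with
  | zero => exact h0
  | succ N ih =>
    obtain ⟨z, hz⟩ := ih
    refine ⟨q N * z - p * ε N, ?_⟩
    rw [succ_eq ε hq hsum, mul_sub, mul_left_comm, hz]
    push_cast
    ring

end cantorTail

theorem hancl_tijdeman_tail_integer_general
    (q ε : ℕ → ℕ) (hq : ∀ k, 2 ≤ q k)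
    (hsum : Summable (fun k : ℕ => (ε k : ℝ) / ∏ i ∈ Finset.range (k + 1), (q i : ℝ)))
    (r : ℤ) (p : ℕ) (hp : 0 < p)
    (hS : (∑' k : ℕ, (ε k : ℝ) / ∏ i ∈ Finset.range (k + 1), (q i : ℝ)) = (r : ℝ) / (p : ℝ)) :
    ∀ N : ℕ, ∃ z : ℤ, (p : ℝ) * cantorTail q ε N = (z : ℝ) := by
  refine cantorTail.exists_int_natCast_mul ε (fun k => by have := hq k; omega) hsum p ⟨r, ?_⟩
  rw [cantorTail.zero_eq_tsum_cantorTerm]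
  unfold cantorTerm
  rw [hS]
  exact mul_div_cancel₀ _ (by positivity)

/-- (Hančl–Tijdeman) Let `(q_k)`, `(ε_k)` be positive integers with
`q_k ≥ 2`, and suppose `S = ∑ ε_k/(q_1⋯q_k)` converges. If `S = r/p` with `r ∈ ℤ`,
`p ∈ ℕ⁺`, then `p ⬝ S_N ∈ ℤ` for every `N ≥ 1`. (Sequences are 0-indexed.) -/
theorem hancl_tijdeman_tail_integer
    (q ε : ℕ → ℕ) (hq : ∀ k, 2 ≤ q k) (hε : ∀ k, 0 < ε k)
    (hsum : Summable (fun k : ℕ => (ε k : ℝ) / ∏ i ∈ Finset.range (k + 1), (q i : ℝ)))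
    (r : ℤ) (p : ℕ) (hp : 0 < p)
    (hS : (∑' k : ℕ, (ε k : ℝ) / ∏ i ∈ Finset.range (k + 1), (q i : ℝ)) = (r : ℝ) / (p : ℝ)) :
    ∀ N : ℕ, ∃ z : ℤ, (p : ℝ) * cantorTail q ε N = (z : ℝ) :=
  hancl_tijdeman_tail_integer_general q ε hq hsum r p hp hS
end
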